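/- Let K > 0, p > 0, θ ≥ 0, ϖ ∈ ℝ, and v : [0,T] × ℝ^d → ℝ. Suppose that for some (t,x), v(t,x) ≥ inf_{e ∈ E} { v(t, x + γ(t,x,e)) + χ(t,x,e) }, that the infimum is attained, and that |x + γ(t,x,e)| ≤ max(K, |x|) for all e ∈ E. Define w(s,y) := v(s,y) + θ e^{−ϖ s} (1 + ((|y| − K)⁺)^p). Then w(t,x) ≥ inf_{e ∈ E} { w(t, x + γ(t,x,e)) + χ(t,x,e) }. -/
import Mathlib


open Set

/-- Lower-obstacle preservation (Lemma A.1): if at `(t,x)` the function `v`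
dominates its lower obstacle `I v`, the infimum defining `I v` is attained,
and impulses satisfy `‖x + γ(t,x,e)‖ ≤ max K ‖x‖`, then the perturbed function
`w(s,y) = v(s,y) + θ e^{−ϖ s}(1 + ((‖y‖ − K)⁺)^p)` dominates its lower
obstacle `I w` at `(t,x)`. -/
theorem stmt_19 {d : ℕ} {E : Type*} [Nonempty E] (T K p θ ϖ : ℝ)
    (hT : 0 < T) (hK : 0 < K) (hp : 0 < p) (hθ : 0 ≤ θ)
    (γ : ℝ → EuclideanSpace ℝ (Fin d) → E → EuclideanSpace ℝ (Fin d))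
    (χ : ℝ → EuclideanSpace ℝ (Fin d) → E → ℝ)
    (v : ℝ → EuclideanSpace ℝ (Fin d) → ℝ)
    (t : ℝ) (ht : t ∈ Icc (0:ℝ) T) (x : EuclideanSpace ℝ (Fin d))
    (hbound : ∀ e : E, ‖x + γ t x e‖ ≤ max K ‖x‖)
    (hattain : ∃ e₀ : E, ∀ e : E,
      v t (x + γ t x e₀) + χ t x e₀ ≤ v t (x + γ t x e) + χ t x e)
    (hsuper : v t x ≥ ⨅ e : E, (v t (x + γ t x e) + χ t x e)) :
    v t x + θ * Real.exp (-ϖ * t) * (1 + (max (‖x‖ - K) 0) ^ p)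
      ≥ ⨅ e : E, ((v t (x + γ t x e)
          + θ * Real.exp (-ϖ * t) * (1 + (max (‖x + γ t x e‖ - K) 0) ^ p))
          + χ t x e) := by
  obtain ⟨e₀, he₀⟩ := hattain
  set C := θ * Real.exp (-ϖ * t) with hC
  have hC0 : 0 ≤ C := mul_nonneg hθ (Real.exp_pos _).le
  -- perturbation monotonicity
  have hpert : ∀ e : E, (max (‖x + γ t x e‖ - K) 0) ^ p ≤ (max (‖x‖ - K) 0) ^ p := by
    intro e
    have h1 : max (‖x + γ t x e‖ - K) 0 ≤ max (‖x‖ - K) 0 := by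
      apply max_le _ (le_max_right _ _)
      have := hbound e
      have : ‖x + γ t x e‖ - K ≤ max K ‖x‖ - K := by linarith
      calc ‖x + γ t x e‖ - K ≤ max K ‖x‖ - K := this
        _ ≤ max (‖x‖ - K) 0 := by
            rcases le_total K ‖x‖ with h | h
            · simp [max_eq_right h]
            · simp [max_eq_left h]
    exact Real.rpow_le_rpow (le_max_right _ _) h1 hp.le
  -- bounded below
  have hbdd : BddBelow (Set.range fun e : E =>
      (v t (x + γ t x e) + C * (1 + (max (‖x + γ t x e‖ - K) 0) ^ p)) + χ t x e) := by
    refine ⟨v t (x + γ t x e₀) + χ t x e₀, ?_⟩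
    rintro y ⟨e, rfl⟩
    have h2 : 0 ≤ C * (1 + (max (‖x + γ t x e‖ - K) 0) ^ p) := by
      apply mul_nonneg hC0
      have : (0:ℝ) ≤ (max (‖x + γ t x e‖ - K) 0) ^ p :=
        Real.rpow_nonneg (le_max_right _ _) _
      linarith
    have := he₀ e
    simp only
    linarith
  have hle : (⨅ e : E, ((v t (x + γ t x e)
      + C * (1 + (max (‖x + γ t x e‖ - K) 0) ^ p)) + χ t x e))
      ≤ (v t (x + γ t x e₀) + C * (1 + (max (‖x + γ t x e₀‖ - K) 0) ^ p)) + χ t x e₀ :=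
    ciInf_le hbdd e₀
  have hv : v t (x + γ t x e₀) + χ t x e₀ ≤ v t x := by
    refine le_trans (le_ciInf he₀) hsuper
  have hp0 : C * (1 + (max (‖x + γ t x e₀‖ - K) 0) ^ p)
      ≤ C * (1 + (max (‖x‖ - K) 0) ^ p) := by
    apply mul_le_mul_of_nonneg_left _ hC0
    linarith [hpert e₀]
  calc (⨅ e : E, ((v t (x + γ t x e)
        + C * (1 + (max (‖x + γ t x e‖ - K) 0) ^ p)) + χ t x e))
      ≤ (v t (x + γ t x e₀) + C * (1 + (max (‖x + γ t x e₀‖ - K) 0) ^ p)) + χ t x e₀ := hle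
    _ ≤ v t x + C * (1 + (max (‖x‖ - K) 0) ^ p) := by linarith
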